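/- arXiv:1512.04514 — 2 statements merged into one kernel-verified Lean document; each statement's English description precedes it below -/
import Mathlib

section
/- With the setup of the directed-information identity, the variational equality holds: the directed information I(A^n → B^n) = ∑_{i=0}^n E[ log( Q_i(B_i|B^{i-1},A^i) / Π_i(B_i|B^{i-1}) ) ] equals the infimum over all families of strictly positive stochastic kernels V_i(b_i|b^{i-1}), i = 0,...,n, of ∑_{i=0}^n E[ log( Q_i(B_i|B^{i-1},A^i) / V_i(B_i|B^{i-1}) ) ], and the infimum is attained at V_i = Π_i for all i. -/
open Finset

/-- Time indices `j ≤ i`. -/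
def idxLe (n : ℕ) (i : Fin (n+1)) : Finset (Fin (n+1)) :=
  Finset.univ.filter fun j => (j : ℕ) ≤ (i : ℕ)

/-- Time indices `j < i`. -/
def idxLt (n : ℕ) (i : Fin (n+1)) : Finset (Fin (n+1)) :=
  Finset.univ.filter fun j => (j : ℕ) < (i : ℕ)

/-- Time indices `i - M ≤ j < i` (the window of the last `M` outputs). -/
def idxWin (n : ℕ) (i : Fin (n+1)) (M : ℕ) : Finset (Fin (n+1)) :=
  Finset.univ.filter fun j => (j : ℕ) < (i : ℕ) ∧ (i : ℕ) ≤ (j : ℕ) + M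

variable {n : ℕ} {A B : Type} [Fintype A] [Fintype B] [DecidableEq A] [DecidableEq B]

/-- Marginal of the joint pmf `μ` on the `A`-coordinates in `SA` and the
`B`-coordinates in `SB`, evaluated at `(a, b)`. -/
noncomputable def marg (μ : (Fin (n+1) → A) → (Fin (n+1) → B) → ℝ)
    (SA SB : Finset (Fin (n+1))) (a : Fin (n+1) → A) (b : Fin (n+1) → B) : ℝ :=
  ∑ a' : Fin (n+1) → A, ∑ b' : Fin (n+1) → B,
    if (∀ j ∈ SA, a' j = a j) ∧ (∀ j ∈ SB, b' j = b j) then μ a' b' else 0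

/-- Marginal of `μ` on `B`-coordinates in `SB`. -/
noncomputable def margB (μ : (Fin (n+1) → A) → (Fin (n+1) → B) → ℝ)
    (SB : Finset (Fin (n+1))) (b : Fin (n+1) → B) : ℝ :=
  ∑ a' : Fin (n+1) → A, ∑ b' : Fin (n+1) → B,
    if ∀ j ∈ SB, b' j = b j then μ a' b' else 0

/-- The induced conditional output pmf `Π_i(b_i | b^{i-1})`. -/
noncomputable def outCond (μ : (Fin (n+1) → A) → (Fin (n+1) → B) → ℝ)
    (i : Fin (n+1)) (b : Fin (n+1) → B) : ℝ :=
  margB μ (idxLe n i) b / margB μ (idxLt n i) b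

/-- Conditional mutual information `I(A_{TA}; B_i | B_{SB})` under `μ`
(terms with zero joint probability vanish). -/
noncomputable def cmi (μ : (Fin (n+1) → A) → (Fin (n+1) → B) → ℝ)
    (TA : Finset (Fin (n+1))) (i : Fin (n+1)) (SB : Finset (Fin (n+1))) : ℝ :=
  ∑ a : Fin (n+1) → A, ∑ b : Fin (n+1) → B,
    μ a b * Real.log (marg μ TA (insert i SB) a b * marg μ ∅ SB a b /
      (marg μ TA SB a b * marg μ ∅ (insert i SB) a b))

/-- Directed information `I(A^n → B^n) = ∑_i I(A^i; B_i | B^{i-1})`. -/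
noncomputable def DI (μ : (Fin (n+1) → A) → (Fin (n+1) → B) → ℝ) : ℝ :=
  ∑ i : Fin (n+1), cmi μ (idxLe n i) i (idxLt n i)

/-- A family of channel kernels `Q_i(b_i | b^{i-1}, a^i)`: nonnegative, summing to one
over `b_i`, and depending only on `(a^i, b^i)`. -/
def IsChannel (Q : Fin (n+1) → (Fin (n+1) → A) → (Fin (n+1) → B) → ℝ) : Prop :=
  (∀ i a b, 0 ≤ Q i a b) ∧
  (∀ i a b, ∑ x : B, Q i a (Function.update b i x) = 1) ∧
  (∀ (i : Fin (n+1)) (a a' : Fin (n+1) → A) (b b' : Fin (n+1) → B),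
    (∀ j : Fin (n+1), (j:ℕ) ≤ (i:ℕ) → a j = a' j) →
    (∀ j : Fin (n+1), (j:ℕ) ≤ (i:ℕ) → b j = b' j) → Q i a b = Q i a' b')

/-- A family of feedback input kernels `P_i(a_i | a^{i-1}, b^{i-1})`: nonnegative,
summing to one over `a_i`, and depending only on `(a^i, b^{i-1})`. -/
def IsInput (P : Fin (n+1) → (Fin (n+1) → A) → (Fin (n+1) → B) → ℝ) : Prop :=
  (∀ i a b, 0 ≤ P i a b) ∧
  (∀ i a b, ∑ x : A, P i (Function.update a i x) b = 1) ∧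
  (∀ (i : Fin (n+1)) (a a' : Fin (n+1) → A) (b b' : Fin (n+1) → B),
    (∀ j : Fin (n+1), (j:ℕ) ≤ (i:ℕ) → a j = a' j) →
    (∀ j : Fin (n+1), (j:ℕ) < (i:ℕ) → b j = b' j) → P i a b = P i a' b')

/-- The joint pmf induced by channel kernels `Q` and input kernels `P`. -/
noncomputable def joint (Q P : Fin (n+1) → (Fin (n+1) → A) → (Fin (n+1) → B) → ℝ)
    (a : Fin (n+1) → A) (b : Fin (n+1) → B) : ℝ :=
  ∏ i : Fin (n+1), Q i a b * P i a b

/-! The chain rule for the joint pmf, obtained by summing out the latest input and output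
coordinates one at a time, factors the marginal of `(A^i, B^i)` as `Q_i` times the marginal of
`(A^i, B^{i-1})`; hence `E[log (Q_i / Π_i)]` is exactly `I(A^i; B_i | B^{i-1})`. For a positive
kernel `V_i`, `E[log (Q_i / V_i)] = E[log (Q_i / Π_i)] + D(Π_i ‖ V_i | B^{i-1})`, and the
conditional divergence is nonnegative by `log x ≥ 1 - 1/x`. Since `Π_i` may vanish, the infimum
is approached rather than attained by positive kernels: the smoothed kernels
`(Π_i + ε) / (∑_{b_i} Π_i + |B| ε)` have cost at most the directed information plus
`(n + 1) log (1 + |B| ε)`. -/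

open Function

def idxBelow (n m : ℕ) : Finset (Fin (n+1)) :=
  univ.filter fun j => (j : ℕ) < m

theorem mem_idxLe {i j : Fin (n+1)} : j ∈ idxLe n i ↔ j ≤ i := by simp [idxLe]

theorem mem_idxLt {i j : Fin (n+1)} : j ∈ idxLt n i ↔ j < i := by simp [idxLt]

theorem self_notMem_idxLt (i : Fin (n+1)) : i ∉ idxLt n i := by simp [mem_idxLt]

theorem idxLe_eq_idxBelow (i : Fin (n+1)) : idxLe n i = idxBelow n (i + 1) := by
  ext j
  simp [idxLe, idxBelow]

theorem idxLe_eq_insert_idxLt (i : Fin (n+1)) : idxLe n i = insert i (idxLt n i) := by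
  ext j
  simp only [mem_idxLe, mem_insert, mem_idxLt, le_iff_eq_or_lt]

theorem idxBelow_zero : idxBelow n 0 = ∅ := by simp [idxBelow]

theorem idxBelow_succ_self : idxBelow n (n + 1) = univ := by
  ext j
  simpa [idxBelow] using j.is_le

section Fibres

variable {C M : Type*} [AddCommMonoid M]

theorem forall_mem_insert_eq_update_iff {S : Finset (Fin (n+1))} {i : Fin (n+1)} (hi : i ∉ S)
    (f g : Fin (n+1) → C) (y : C) :
    (∀ j ∈ insert i S, f j = update g i y j) ↔ (∀ j ∈ S, f j = g j) ∧ f i = y := by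
  rw [Finset.forall_mem_insert, update_self, and_comm]
  refine and_congr_left' (forall₂_congr fun j hj => ?_)
  rw [update_of_ne (ne_of_mem_of_not_mem hj hi)]

variable [DecidableEq C] [Fintype C]

theorem sum_ite_forall_mem_insert_eq_update {S : Finset (Fin (n+1))} {i : Fin (n+1)}
    (hi : i ∉ S) (f g : Fin (n+1) → C) (v : M) :
    ∑ y, (if ∀ j ∈ insert i S, f j = update g i y j then v else 0)
      = if ∀ j ∈ S, f j = g j then v else 0 := by
  simp only [forall_mem_insert_eq_update_iff hi, ite_and, Finset.sum_ite_irrel,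
    Finset.sum_ite_eq, Finset.mem_univ, if_true, Finset.sum_const_zero]

theorem card_filter_forall_mem_eq (S : Finset (Fin (n+1))) (c : Fin (n+1) → C) :
    #{b : Fin (n+1) → C | ∀ j ∈ S, b j = c j} = Fintype.card C ^ #Sᶜ := by
  have : ({b : Fin (n+1) → C | ∀ j ∈ S, b j = c j} : Finset _)
      = Fintype.piFinset fun j => if j ∈ S then {c j} else univ := by
    ext b
    simp only [mem_filter, mem_univ, true_and, Fintype.mem_piFinset]
    refine forall_congr' fun j => ?_
    split_ifs with hj <;> simp [hj]
  simp only [this, Fintype.card_piFinset, apply_ite card, card_singleton, card_univ]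
  rw [prod_ite, prod_const_one, one_mul, prod_const, filter_not, filter_mem_eq_inter,
    univ_inter, compl_eq_univ_sdiff]

theorem sum_ite_forall_mem_eq_of_congr {S : Finset (Fin (n+1))} {c : Fin (n+1) → C}
    {g : (Fin (n+1) → C) → M} (hg : ∀ b, (∀ j ∈ S, b j = c j) → g b = g c) :
    ∑ b, (if ∀ j ∈ S, b j = c j then g b else 0) = Fintype.card C ^ #Sᶜ • g c := by
  rw [← sum_filter, sum_congr rfl fun b hb => hg b (mem_filter.mp hb).2, sum_const,
    card_filter_forall_mem_eq]

theorem sum_ite_forall_mem_eq_of_congr_insert {S : Finset (Fin (n+1))} {i : Fin (n+1)}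
    (hi : i ∉ S) {g : (Fin (n+1) → C) → M}
    (hg : ∀ b b', (∀ j ∈ insert i S, b j = b' j) → g b = g b') (c : Fin (n+1) → C) :
    ∑ b, (if ∀ j ∈ S, b j = c j then g b else 0)
      = Fintype.card C ^ #(insert i S)ᶜ • ∑ y, g (update c i y) := by
  simp only [← sum_ite_forall_mem_insert_eq_update hi _ c]
  rw [sum_comm, smul_sum]
  exact sum_congr rfl fun y _ => sum_ite_forall_mem_eq_of_congr fun b hb => hg _ _ hb

end Fibres

section Marginals

variable (μ : (Fin (n+1) → A) → (Fin (n+1) → B) → ℝ)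

theorem marg_empty_left (S : Finset (Fin (n+1))) (a : Fin (n+1) → A) (b : Fin (n+1) → B) :
    marg μ ∅ S a b = margB μ S b := by
  simp [marg, margB]

theorem marg_empty_empty (a : Fin (n+1) → A) (b : Fin (n+1) → B) :
    marg μ ∅ ∅ a b = ∑ a', ∑ b', μ a' b' := by
  simp [marg]

theorem marg_univ_univ (a : Fin (n+1) → A) (b : Fin (n+1) → B) :
    marg μ univ univ a b = μ a b := by
  simp [marg, ← funext_iff, ite_and]

theorem sum_marg_update_left {SA : Finset (Fin (n+1))} {i : Fin (n+1)} (hi : i ∉ SA)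
    (SB : Finset (Fin (n+1))) (a : Fin (n+1) → A) (b : Fin (n+1) → B) :
    ∑ x, marg μ (insert i SA) SB (update a i x) b = marg μ SA SB a b := by
  simp only [marg, ite_and]
  rw [sum_comm]
  refine sum_congr rfl fun a' _ => ?_
  rw [sum_comm]
  exact sum_congr rfl fun b' _ => sum_ite_forall_mem_insert_eq_update hi a' a _

theorem sum_marg_update_right {SB : Finset (Fin (n+1))} {i : Fin (n+1)} (hi : i ∉ SB)
    (SA : Finset (Fin (n+1))) (a : Fin (n+1) → A) (b : Fin (n+1) → B) :
    ∑ y, marg μ SA (insert i SB) a (update b i y) = marg μ SA SB a b := by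
  simp only [marg, and_comm (a := ∀ j ∈ SA, _), ite_and]
  rw [sum_comm]
  refine sum_congr rfl fun a' _ => ?_
  rw [sum_comm]
  exact sum_congr rfl fun b' _ => sum_ite_forall_mem_insert_eq_update hi b' b _

end Marginals

theorem le_sum_sum {α β : Type*} [Fintype α] [Fintype β] {f : α → β → ℝ}
    (hf : ∀ a b, 0 ≤ f a b) (a : α) (b : β) : f a b ≤ ∑ a', ∑ b', f a' b' :=
  (single_le_sum (fun b' _ => hf a b') (mem_univ b)).trans
    (single_le_sum (fun a' _ => sum_nonneg fun b' _ => hf a' b') (mem_univ a))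

theorem sum_sum_eq_zero_of_not_nonempty {α β : Type*} [Fintype α] [Fintype β]
    (h : ¬(Nonempty α ∧ Nonempty β)) (g : (Fin (n+1) → α) → (Fin (n+1) → β) → ℝ) :
    ∑ a, ∑ b, g a b = 0 := by
  rcases not_and_or.mp h with hα | hβ
  · have := not_nonempty_iff.mp hα
    simp
  · have := not_nonempty_iff.mp hβ
    simp

theorem le_marg {μ : (Fin (n+1) → A) → (Fin (n+1) → B) → ℝ} (hμ : ∀ a b, 0 ≤ μ a b)
    (SA SB : Finset (Fin (n+1))) (a : Fin (n+1) → A) (b : Fin (n+1) → B) :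
    μ a b ≤ marg μ SA SB a b := by
  have h := le_sum_sum (f := fun a' b' =>
    if (∀ j ∈ SA, a' j = a j) ∧ (∀ j ∈ SB, b' j = b j) then μ a' b' else 0)
    (fun a' b' => by split_ifs <;> simp [hμ]) a b
  simp only [implies_true, and_self, if_true] at h
  exact h



section ConditionalOutput

variable {A B : Type} [Fintype A] [Fintype B] [DecidableEq B]
  (μ : (Fin (n+1) → A) → (Fin (n+1) → B) → ℝ)

theorem margB_congr {S : Finset (Fin (n+1))} {b b' : Fin (n+1) → B}
    (h : ∀ j ∈ S, b j = b' j) : margB μ S b = margB μ S b' := by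
  simp only [margB]
  refine sum_congr rfl fun a' _ => sum_congr rfl fun b'' _ => if_congr ?_ rfl rfl
  exact forall₂_congr fun j hj => by rw [h j hj]

theorem sum_margB_update {S : Finset (Fin (n+1))} {i : Fin (n+1)} (hi : i ∉ S)
    (b : Fin (n+1) → B) :
    ∑ y, margB μ (insert i S) (update b i y) = margB μ S b := by
  simp only [margB]
  rw [sum_comm]
  refine sum_congr rfl fun a' _ => ?_
  rw [sum_comm]
  exact sum_congr rfl fun b' _ => sum_ite_forall_mem_insert_eq_update hi b' b _

theorem sum_margB_mul (S : Finset (Fin (n+1))) (g : (Fin (n+1) → B) → ℝ) :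
    ∑ b, margB μ S b * g b
      = ∑ a', ∑ b', μ a' b' * ∑ b, if ∀ j ∈ S, b j = b' j then g b else 0 := by
  simp only [margB, sum_mul, mul_sum, ite_mul, zero_mul, mul_ite, mul_zero]
  rw [sum_comm]
  refine sum_congr rfl fun a' _ => ?_
  rw [sum_comm]
  refine sum_congr rfl fun b' _ => sum_congr rfl fun b _ => ?_
  simp only [eq_comm (a := b' _)]

variable {μ}

theorem le_margB (hμ : ∀ a b, 0 ≤ μ a b) (S : Finset (Fin (n+1))) (a : Fin (n+1) → A)
    (b : Fin (n+1) → B) : μ a b ≤ margB μ S b := by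
  have h := le_sum_sum (f := fun a' b' => if ∀ j ∈ S, b' j = b j then μ a' b' else 0)
    (fun a' b' => by split_ifs <;> simp [hμ]) a b
  simp only [implies_true, if_true] at h
  exact h

theorem margB_nonneg (hμ : ∀ a b, 0 ≤ μ a b) (S : Finset (Fin (n+1))) (b : Fin (n+1) → B) :
    0 ≤ margB μ S b :=
  sum_nonneg fun a' _ => sum_nonneg fun b' _ => by split_ifs <;> simp [hμ]

theorem outCond_nonneg (hμ : ∀ a b, 0 ≤ μ a b) (i : Fin (n+1)) (b : Fin (n+1) → B) :
    0 ≤ outCond μ i b :=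
  div_nonneg (margB_nonneg hμ _ b) (margB_nonneg hμ _ b)

theorem outCond_pos (hμ : ∀ a b, 0 ≤ μ a b) (i : Fin (n+1)) {a : Fin (n+1) → A}
    {b : Fin (n+1) → B} (h : 0 < μ a b) : 0 < outCond μ i b :=
  div_pos (h.trans_le (le_margB hμ _ a b)) (h.trans_le (le_margB hμ _ a b))

theorem outCond_congr {i : Fin (n+1)} {b b' : Fin (n+1) → B}
    (h : ∀ j ∈ idxLe n i, b j = b' j) : outCond μ i b = outCond μ i b' := by
  rw [outCond, outCond, margB_congr μ h,
    margB_congr μ fun j hj => h j (mem_idxLe.mpr (mem_idxLt.mp hj).le)]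

-- Not `= 1`: where the past `b^{i-1}` has probability zero, `outCond` is `0 / 0 = 0`.
theorem sum_outCond_update_le_one (i : Fin (n+1)) (b : Fin (n+1) → B) :
    ∑ y, outCond μ i (update b i y) ≤ 1 := by
  have hpast : ∀ y, margB μ (idxLt n i) (update b i y) = margB μ (idxLt n i) b :=
    fun y => margB_congr μ fun j hj => update_of_ne (mem_idxLt.mp hj).ne y b
  simp only [outCond, hpast, ← sum_div, idxLe_eq_insert_idxLt,
    sum_margB_update μ (self_notMem_idxLt i)]
  exact div_self_le_one _

theorem sum_mul_log_div_eq_add {q : (Fin (n+1) → A) → (Fin (n+1) → B) → ℝ}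
    (hμ : ∀ a b, 0 ≤ μ a b) (hq : ∀ a b, μ a b ≠ 0 → q a b ≠ 0)
    {V : (Fin (n+1) → B) → ℝ} (hV : ∀ b, 0 < V b) (i : Fin (n+1)) :
    ∑ a, ∑ b, μ a b * Real.log (q a b / V b)
      = ∑ a, ∑ b, μ a b * Real.log (q a b / outCond μ i b)
        + ∑ a, ∑ b, μ a b * Real.log (outCond μ i b / V b) := by
  simp only [← sum_add_distrib]
  refine sum_congr rfl fun a _ => sum_congr rfl fun b _ => ?_
  rcases (hμ a b).eq_or_lt with h | h
  · simp [← h]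
  have hpi := (outCond_pos hμ i h).ne'
  rw [← mul_add, ← Real.log_mul (div_ne_zero (hq a b h.ne') hpi) (div_ne_zero hpi (hV b).ne'),
    div_mul_div_cancel₀ hpi]

variable [Nonempty B] {i : Fin (n+1)} {V : (Fin (n+1) → B) → ℝ}

theorem sum_mul_div_outCond_le (hμ : ∀ a b, 0 ≤ μ a b) (hV0 : ∀ b, 0 ≤ V b)
    (hV1 : ∀ b, ∑ y, V (update b i y) = 1)
    (hV2 : ∀ b b', (∀ j ∈ idxLe n i, b j = b' j) → V b = V b') :
    ∑ a, ∑ b, μ a b * (V b / outCond μ i b) ≤ ∑ a, ∑ b, μ a b := by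
  -- a sum over whole sequences `b` counts each prefix `b^i` exactly `K` times
  set K : ℝ := ((Fintype.card B ^ #(idxLe n i)ᶜ : ℕ) : ℝ)
  have hK : 0 < K := by positivity
  have hlhs : ∑ b, margB μ (idxLe n i) b * (V b / outCond μ i b)
      = K * ∑ a, ∑ b, μ a b * (V b / outCond μ i b) := by
    rw [sum_margB_mul, mul_sum]
    refine sum_congr rfl fun a _ => ?_
    rw [mul_sum]
    refine sum_congr rfl fun b _ => ?_
    rw [sum_ite_forall_mem_eq_of_congr fun b' hb' => by rw [hV2 _ _ hb', outCond_congr hb'],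
      nsmul_eq_mul]
    ring
  have hrhs : ∑ b, margB μ (idxLt n i) b * V b = K * ∑ a, ∑ b, μ a b := by
    rw [sum_margB_mul, mul_sum]
    refine sum_congr rfl fun a _ => ?_
    rw [mul_sum]
    refine sum_congr rfl fun b _ => ?_
    rw [sum_ite_forall_mem_eq_of_congr_insert (self_notMem_idxLt i)
      (by simpa only [← idxLe_eq_insert_idxLt] using hV2), hV1, ← idxLe_eq_insert_idxLt,
      nsmul_eq_mul, mul_one, mul_comm]
  have hle : ∑ b, margB μ (idxLe n i) b * (V b / outCond μ i b)
      ≤ ∑ b, margB μ (idxLt n i) b * V b := by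
    refine sum_le_sum fun b _ => ?_
    rcases eq_or_ne (margB μ (idxLe n i) b) 0 with h | h
    · rw [h, zero_mul]
      exact mul_nonneg (margB_nonneg hμ _ b) (hV0 b)
    · rw [outCond, div_div_eq_mul_div, mul_div_cancel₀ _ h, mul_comm]
  exact le_of_mul_le_mul_left (hlhs ▸ hrhs ▸ hle) hK

theorem sum_mul_log_outCond_div_nonneg (hμ : ∀ a b, 0 ≤ μ a b) (hV0 : ∀ b, 0 < V b)
    (hV1 : ∀ b, ∑ y, V (update b i y) = 1)
    (hV2 : ∀ b b', (∀ j ∈ idxLe n i, b j = b' j) → V b = V b') :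
    0 ≤ ∑ a, ∑ b, μ a b * Real.log (outCond μ i b / V b) := by
  have hterm : ∀ a b, μ a b * (1 - V b / outCond μ i b)
      ≤ μ a b * Real.log (outCond μ i b / V b) := fun a b => by
    rcases (hμ a b).eq_or_lt with h | h
    · simp [← h]
    · refine mul_le_mul_of_nonneg_left ?_ h.le
      simpa only [inv_div] using
        Real.one_sub_inv_le_log_of_pos (div_pos (outCond_pos hμ i h) (hV0 b))
  calc 0 ≤ ∑ a, ∑ b, μ a b - ∑ a, ∑ b, μ a b * (V b / outCond μ i b) :=
        sub_nonneg.mpr (sum_mul_div_outCond_le hμ (fun b => (hV0 b).le) hV1 hV2)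
    _ = ∑ a, ∑ b, μ a b * (1 - V b / outCond μ i b) := by
        simp only [mul_sub, mul_one, sum_sub_distrib]
    _ ≤ _ := sum_le_sum fun a _ => sum_le_sum fun b _ => hterm a b

end ConditionalOutput

section Kernels

variable {A B : Type}

theorem IsChannel.apply_update_right [Fintype B]
    {Q : Fin (n+1) → (Fin (n+1) → A) → (Fin (n+1) → B) → ℝ} (hQ : IsChannel Q)
    {i j : Fin (n+1)} (hji : j < i) (a : Fin (n+1) → A) (b : Fin (n+1) → B) (y : B) :
    Q j a (update b i y) = Q j a b :=
  hQ.2.2 j a a _ b (fun _ _ => rfl) fun _ hk =>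
    update_of_ne (lt_of_le_of_lt (Fin.le_def.mpr hk) hji).ne y b

theorem IsChannel.apply_update_left [Fintype B]
    {Q : Fin (n+1) → (Fin (n+1) → A) → (Fin (n+1) → B) → ℝ} (hQ : IsChannel Q)
    {i j : Fin (n+1)} (hji : j < i) (a : Fin (n+1) → A) (b : Fin (n+1) → B) (x : A) :
    Q j (update a i x) b = Q j a b :=
  hQ.2.2 j _ a b b (fun _ hk =>
    update_of_ne (lt_of_le_of_lt (Fin.le_def.mpr hk) hji).ne x a) fun _ _ => rfl

theorem IsInput.apply_update_right [Fintype A]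
    {P : Fin (n+1) → (Fin (n+1) → A) → (Fin (n+1) → B) → ℝ} (hP : IsInput P)
    {i j : Fin (n+1)} (hji : j ≤ i) (a : Fin (n+1) → A) (b : Fin (n+1) → B) (y : B) :
    P j a (update b i y) = P j a b :=
  hP.2.2 j a a _ b (fun _ _ => rfl) fun _ hk =>
    update_of_ne (lt_of_lt_of_le (Fin.lt_def.mpr hk) hji).ne y b

theorem IsInput.apply_update_left [Fintype A]
    {P : Fin (n+1) → (Fin (n+1) → A) → (Fin (n+1) → B) → ℝ} (hP : IsInput P)
    {i j : Fin (n+1)} (hji : j < i) (a : Fin (n+1) → A) (b : Fin (n+1) → B) (x : A) :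
    P j (update a i x) b = P j a b :=
  hP.2.2 j _ a b b (fun _ hk =>
    update_of_ne (lt_of_le_of_lt (Fin.le_def.mpr hk) hji).ne x a) fun _ _ => rfl

theorem ne_zero_of_joint_ne_zero
    {Q P : Fin (n+1) → (Fin (n+1) → A) → (Fin (n+1) → B) → ℝ} {a : Fin (n+1) → A}
    {b : Fin (n+1) → B} (h : joint Q P a b ≠ 0) (i : Fin (n+1)) : Q i a b ≠ 0 :=
  left_ne_zero_of_mul (prod_ne_zero_iff.mp h i (mem_univ i))

variable [Fintype A] [Fintype B]
  {Q P : Fin (n+1) → (Fin (n+1) → A) → (Fin (n+1) → B) → ℝ}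

theorem joint_nonneg (hQ : IsChannel Q) (hP : IsInput P) (a : Fin (n+1) → A)
    (b : Fin (n+1) → B) : 0 ≤ joint Q P a b :=
  prod_nonneg fun i _ => mul_nonneg (hQ.1 i a b) (hP.1 i a b)

theorem sum_prod_idxLe_update_right (hQ : IsChannel Q) (hP : IsInput P) (i : Fin (n+1))
    (a : Fin (n+1) → A) (b : Fin (n+1) → B) :
    ∑ y, ∏ j ∈ idxLe n i, Q j a (update b i y) * P j a (update b i y)
      = P i a b * ∏ j ∈ idxLt n i, Q j a b * P j a b := by
  have hpast : ∀ y, ∏ j ∈ idxLt n i, Q j a (update b i y) * P j a (update b i y)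
      = ∏ j ∈ idxLt n i, Q j a b * P j a b := fun y => prod_congr rfl fun j hj => by
    rw [hQ.apply_update_right (mem_idxLt.mp hj), hP.apply_update_right (mem_idxLt.mp hj).le]
  simp only [idxLe_eq_insert_idxLt, prod_insert (self_notMem_idxLt i), hpast,
    hP.apply_update_right le_rfl, mul_assoc, ← sum_mul, hQ.2.1, one_mul]

theorem sum_prod_idxLt_update_left (hQ : IsChannel Q) (hP : IsInput P) (i : Fin (n+1))
    (a : Fin (n+1) → A) (b : Fin (n+1) → B) :
    ∑ x, P i (update a i x) b *
        ∏ j ∈ idxLt n i, Q j (update a i x) b * P j (update a i x) b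
      = ∏ j ∈ idxLt n i, Q j a b * P j a b := by
  have hpast : ∀ x, ∏ j ∈ idxLt n i, Q j (update a i x) b * P j (update a i x) b
      = ∏ j ∈ idxLt n i, Q j a b * P j a b := fun x => prod_congr rfl fun j hj => by
    rw [hQ.apply_update_left (mem_idxLt.mp hj), hP.apply_update_left (mem_idxLt.mp hj)]
  simp only [hpast, ← sum_mul, hP.2.1, one_mul]

end Kernels

section ChainRule

variable {Q P : Fin (n+1) → (Fin (n+1) → A) → (Fin (n+1) → B) → ℝ}
  {μ : (Fin (n+1) → A) → (Fin (n+1) → B) → ℝ}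

theorem marg_idxLe_idxLt_eq (hQ : IsChannel Q) (hP : IsInput P) {i : Fin (n+1)}
    (h : ∀ a b, marg μ (idxLe n i) (idxLe n i) a b = ∏ j ∈ idxLe n i, Q j a b * P j a b)
    (a : Fin (n+1) → A) (b : Fin (n+1) → B) :
    marg μ (idxLe n i) (idxLt n i) a b = P i a b * ∏ j ∈ idxLt n i, Q j a b * P j a b := by
  rw [← sum_marg_update_right μ (self_notMem_idxLt i), ← idxLe_eq_insert_idxLt]
  simp only [h, sum_prod_idxLe_update_right hQ hP]

theorem marg_idxLt_idxLt_eq (hQ : IsChannel Q) (hP : IsInput P) {i : Fin (n+1)}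
    (h : ∀ a b, marg μ (idxLe n i) (idxLt n i) a b
      = P i a b * ∏ j ∈ idxLt n i, Q j a b * P j a b)
    (a : Fin (n+1) → A) (b : Fin (n+1) → B) :
    marg μ (idxLt n i) (idxLt n i) a b = ∏ j ∈ idxLt n i, Q j a b * P j a b := by
  rw [← sum_marg_update_left μ (self_notMem_idxLt i), ← idxLe_eq_insert_idxLt]
  simp only [h, sum_prod_idxLt_update_left hQ hP]

theorem marg_idxBelow_joint (hQ : IsChannel Q) (hP : IsInput P) {m : ℕ} (hm : m ≤ n + 1)
    (a : Fin (n+1) → A) (b : Fin (n+1) → B) :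
    marg (joint Q P) (idxBelow n m) (idxBelow n m) a b
      = ∏ j ∈ idxBelow n m, Q j a b * P j a b := by
  induction hm using Nat.decreasingInduction generalizing a b with
  | self => rw [idxBelow_succ_self, marg_univ_univ]; rfl
  | of_succ k hk ih =>
    let i : Fin (n+1) := ⟨k, hk⟩
    rw [show k + 1 = (i : ℕ) + 1 from rfl, ← idxLe_eq_idxBelow] at ih
    exact marg_idxLt_idxLt_eq hQ hP (marg_idxLe_idxLt_eq hQ hP ih) a b

theorem sum_joint (hQ : IsChannel Q) (hP : IsInput P) [Nonempty A] [Nonempty B] :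
    ∑ a, ∑ b, joint Q P a b = 1 := by
  have h := marg_idxBelow_joint hQ hP (Nat.zero_le _) (Classical.arbitrary (Fin (n+1) → A))
    (Classical.arbitrary (Fin (n+1) → B))
  rwa [idxBelow_zero, marg_empty_empty, prod_empty] at h

theorem marg_joint_idxLe_idxLe (hQ : IsChannel Q) (hP : IsInput P) (i : Fin (n+1))
    (a : Fin (n+1) → A) (b : Fin (n+1) → B) :
    marg (joint Q P) (idxLe n i) (idxLe n i) a b
      = Q i a b * marg (joint Q P) (idxLe n i) (idxLt n i) a b := by
  have h : ∀ a b, marg (joint Q P) (idxLe n i) (idxLe n i) a b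
      = ∏ j ∈ idxLe n i, Q j a b * P j a b := fun a b => by
    rw [idxLe_eq_idxBelow]
    exact marg_idxBelow_joint hQ hP i.isLt a b
  rw [h, marg_idxLe_idxLt_eq hQ hP h, idxLe_eq_insert_idxLt, prod_insert (self_notMem_idxLt i)]
  ring

end ChainRule


section Smoothing

variable {B : Type} [Fintype B]

noncomputable def smoothKernel (ε : ℝ) (i : Fin (n+1)) (W : (Fin (n+1) → B) → ℝ)
    (b : Fin (n+1) → B) : ℝ :=
  (W b + ε) / (∑ y, W (update b i y) + Fintype.card B * ε)

theorem smoothKernel_congr {ε : ℝ} {i : Fin (n+1)} {W : (Fin (n+1) → B) → ℝ}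
    (hW : ∀ b b', (∀ j ∈ idxLe n i, b j = b' j) → W b = W b')
    {b b' : Fin (n+1) → B} (h : ∀ j ∈ idxLe n i, b j = b' j) :
    smoothKernel ε i W b = smoothKernel ε i W b' := by
  have hupd : ∀ y, W (update b i y) = W (update b' i y) := fun y =>
    hW _ _ fun j hj => by
      rcases eq_or_ne j i with rfl | hji
      · simp
      · simp [update_of_ne hji, h j hj]
  simp only [smoothKernel, hW b b' h, hupd]

variable [Nonempty B] {ε : ℝ} {i : Fin (n+1)} {W : (Fin (n+1) → B) → ℝ}

theorem smoothKernel_pos (hW : ∀ b, 0 ≤ W b) (hε : 0 < ε) (b : Fin (n+1) → B) :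
    0 < smoothKernel ε i W b := by
  have := hW b
  have := sum_nonneg fun y (_ : y ∈ univ) => hW (update b i y)
  unfold smoothKernel
  positivity

theorem sum_smoothKernel_update (hW : ∀ b, 0 ≤ W b) (hε : 0 < ε) (b : Fin (n+1) → B) :
    ∑ y, smoothKernel ε i W (update b i y) = 1 := by
  have hden : 0 < ∑ y, W (update b i y) + Fintype.card B * ε := by
    have := sum_nonneg fun y (_ : y ∈ univ) => hW (update b i y)
    positivity
  simp only [smoothKernel, update_idem, ← sum_div, sum_add_distrib, sum_const,
    card_univ, nsmul_eq_mul]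
  exact div_self hden.ne'

theorem le_mul_smoothKernel (hW : ∀ b, 0 ≤ W b) (hε : 0 < ε) {b : Fin (n+1) → B}
    (hmass : ∑ y, W (update b i y) ≤ 1) :
    W b ≤ (1 + Fintype.card B * ε) * smoothKernel ε i W b := by
  have := hW b
  have hden : 0 < ∑ y, W (update b i y) + Fintype.card B * ε := by
    have := sum_nonneg fun y (_ : y ∈ univ) => hW (update b i y)
    positivity
  calc W b ≤ W b + ε := by linarith
    _ = (∑ y, W (update b i y) + Fintype.card B * ε) * smoothKernel ε i W b := by
        rw [smoothKernel, mul_div_cancel₀ _ hden.ne']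
    _ ≤ (1 + Fintype.card B * ε) * smoothKernel ε i W b := by
        gcongr
        exact (smoothKernel_pos hW hε b).le

end Smoothing

section Variational

variable {Q P : Fin (n+1) → (Fin (n+1) → A) → (Fin (n+1) → B) → ℝ}

theorem sum_mul_log_div_outCond_eq_cmi (hQ : IsChannel Q) (hP : IsInput P) (i : Fin (n+1)) :
    ∑ a, ∑ b, joint Q P a b * Real.log (Q i a b / outCond (joint Q P) i b)
      = cmi (joint Q P) (idxLe n i) i (idxLt n i) := by
  refine sum_congr rfl fun a _ => sum_congr rfl fun b _ => ?_
  rcases (joint_nonneg hQ hP a b).eq_or_lt with h | h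
  · simp [← h]
  have hM : marg (joint Q P) (idxLe n i) (idxLt n i) a b ≠ 0 :=
    (h.trans_le (le_marg (joint_nonneg hQ hP) _ _ a b)).ne'
  rw [← idxLe_eq_insert_idxLt, marg_joint_idxLe_idxLe hQ hP, marg_empty_left, marg_empty_left,
    outCond]
  congr 2
  field_simp

theorem sum_mul_log_div_outCond_eq_DI (hQ : IsChannel Q) (hP : IsInput P) :
    ∑ i, ∑ a, ∑ b, joint Q P a b * Real.log (Q i a b / outCond (joint Q P) i b)
      = DI (joint Q P) :=
  sum_congr rfl fun i _ => sum_mul_log_div_outCond_eq_cmi hQ hP i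

theorem sum_mul_log_div_eq_DI_add (hQ : IsChannel Q) (hP : IsInput P)
    {V : Fin (n+1) → (Fin (n+1) → B) → ℝ} (hV : ∀ i b, 0 < V i b) :
    ∑ i, ∑ a, ∑ b, joint Q P a b * Real.log (Q i a b / V i b)
      = DI (joint Q P)
        + ∑ i, ∑ a, ∑ b, joint Q P a b * Real.log (outCond (joint Q P) i b / V i b) := by
  rw [← sum_mul_log_div_outCond_eq_DI hQ hP, ← sum_add_distrib]
  exact sum_congr rfl fun i _ => sum_mul_log_div_eq_add (joint_nonneg hQ hP)
    (fun _ _ h => ne_zero_of_joint_ne_zero h i) (hV i) i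

theorem DI_le_sum_mul_log_div [Nonempty B] (hQ : IsChannel Q) (hP : IsInput P)
    {V : Fin (n+1) → (Fin (n+1) → B) → ℝ} (hV0 : ∀ i b, 0 < V i b)
    (hV1 : ∀ i b, ∑ y, V i (update b i y) = 1)
    (hV2 : ∀ (i : Fin (n+1)) (b b' : Fin (n+1) → B),
      (∀ j : Fin (n+1), (j:ℕ) ≤ (i:ℕ) → b j = b' j) → V i b = V i b') :
    DI (joint Q P) ≤ ∑ i, ∑ a, ∑ b, joint Q P a b * Real.log (Q i a b / V i b) := by
  rw [sum_mul_log_div_eq_DI_add hQ hP hV0]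
  exact le_add_of_nonneg_right <| sum_nonneg fun i _ =>
    sum_mul_log_outCond_div_nonneg (joint_nonneg hQ hP) (hV0 i) (hV1 i)
      fun b b' h => hV2 i b b' fun j hj => h j (mem_idxLe.mpr hj)

theorem exists_sum_mul_log_div_le [Nonempty A] [Nonempty B] (hQ : IsChannel Q)
    (hP : IsInput P) {δ : ℝ} (hδ : 0 < δ) :
    ∃ V : Fin (n+1) → (Fin (n+1) → B) → ℝ,
      (∀ i b, 0 < V i b) ∧
      (∀ i b, ∑ y, V i (update b i y) = 1) ∧
      (∀ (i : Fin (n+1)) (b b' : Fin (n+1) → B),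
        (∀ j : Fin (n+1), (j:ℕ) ≤ (i:ℕ) → b j = b' j) → V i b = V i b') ∧
      ∑ i, ∑ a, ∑ b, joint Q P a b * Real.log (Q i a b / V i b) ≤ DI (joint Q P) + δ := by
  set μ := joint Q P
  have hμ : ∀ a b, 0 ≤ μ a b := joint_nonneg hQ hP
  set c : ℝ := (Fintype.card B : ℝ)
  have hc : 0 < c := by positivity
  set ε := δ / ((n + 1) * c)
  have hε : 0 < ε := by positivity
  set V := fun i => smoothKernel ε i (outCond μ i)
  have hV0 : ∀ i b, 0 < V i b := fun i b => smoothKernel_pos (outCond_nonneg hμ i) hε b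
  refine ⟨V, hV0, fun i b => sum_smoothKernel_update (outCond_nonneg hμ i) hε b,
    fun i b b' h => smoothKernel_congr (fun _ _ => outCond_congr)
      fun j hj => h j (mem_idxLe.mp hj), ?_⟩
  have hterm : ∀ i a b,
      μ a b * Real.log (outCond μ i b / V i b) ≤ μ a b * Real.log (1 + c * ε) := by
    intro i a b
    rcases (hμ a b).eq_or_lt with h | h
    · simp [← h]
    refine mul_le_mul_of_nonneg_left
      (Real.log_le_log (div_pos (outCond_pos hμ i h) (hV0 i b)) ?_) h.le
    rw [div_le_iff₀ (hV0 i b)]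
    exact le_mul_smoothKernel (outCond_nonneg hμ i) hε (sum_outCond_update_le_one i b)
  rw [sum_mul_log_div_eq_DI_add hQ hP hV0, add_le_add_iff_left]
  calc ∑ i, ∑ a, ∑ b, μ a b * Real.log (outCond μ i b / V i b)
      ≤ ∑ i : Fin (n+1), ∑ a, ∑ b, μ a b * Real.log (1 + c * ε) :=
        sum_le_sum fun i _ => sum_le_sum fun a _ => sum_le_sum fun b _ => hterm i a b
    _ = (n + 1) * Real.log (1 + c * ε) := by
        simp only [← sum_mul, sum_joint hQ hP, one_mul, sum_const, card_univ, Fintype.card_fin,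
          nsmul_eq_mul, μ]
        push_cast
        ring
    _ ≤ (n + 1) * (c * ε) := by
        gcongr
        linarith [Real.log_le_sub_one_of_pos (by positivity : 0 < 1 + c * ε)]
    _ = δ := by
        simp only [ε]
        field_simp

end Variational

/-- the variational equality — directed information equals the infimum,
over strictly positive output kernels `V_i(b_i|b^{i-1})`, of `∑ E[log(Q/V)]`, and the
infimum is attained at `V_i = Π_i`. -/
theorem stmt1 (Q P : Fin (n+1) → (Fin (n+1) → A) → (Fin (n+1) → B) → ℝ)
    (hQ : IsChannel Q) (hP : IsInput P) :
    DI (joint Q P)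
      = sInf {x : ℝ | ∃ V : Fin (n+1) → (Fin (n+1) → B) → ℝ,
          (∀ i b, 0 < V i b) ∧
          (∀ i b, ∑ y : B, V i (Function.update b i y) = 1) ∧
          (∀ (i : Fin (n+1)) (b b' : Fin (n+1) → B),
            (∀ j : Fin (n+1), (j:ℕ) ≤ (i:ℕ) → b j = b' j) → V i b = V i b') ∧
          x = ∑ i : Fin (n+1), ∑ a : Fin (n+1) → A, ∑ b : Fin (n+1) → B,
                joint Q P a b * Real.log (Q i a b / V i b)}
    ∧ (∑ i : Fin (n+1), ∑ a : Fin (n+1) → A, ∑ b : Fin (n+1) → B,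
          joint Q P a b * Real.log (Q i a b / outCond (joint Q P) i b))
        = DI (joint Q P) := by
  refine ⟨?_, sum_mul_log_div_outCond_eq_DI hQ hP⟩
  by_cases hAB : Nonempty A ∧ Nonempty B
  · obtain ⟨_, _⟩ := hAB
    refine (csInf_eq_of_forall_ge_of_forall_gt_exists_lt ?_ ?_ ?_).symm
    · obtain ⟨V, hV0, hV1, hV2, -⟩ := exists_sum_mul_log_div_le hQ hP one_pos
      exact ⟨_, V, hV0, hV1, hV2, rfl⟩
    · rintro _ ⟨V, hV0, hV1, hV2, rfl⟩
      exact DI_le_sum_mul_log_div hQ hP hV0 hV1 hV2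
    · intro w hw
      obtain ⟨V, hV0, hV1, hV2, hle⟩ :=
        exists_sum_mul_log_div_le hQ hP (half_pos (sub_pos.mpr hw))
      exact ⟨_, ⟨V, hV0, hV1, hV2, rfl⟩, by linarith⟩
  · have hzero := sum_sum_eq_zero_of_not_nonempty (n := n) hAB
    have hDI : DI (joint Q P) = 0 := by simp only [DI, cmi, hzero, sum_const_zero]
    rw [hDI]
    refine le_antisymm (Real.sInf_nonneg ?_) (Real.sInf_nonpos ?_) <;>
      rintro _ ⟨V, -, -, -, rfl⟩ <;> simp [hzero]
end

section
/- Let S_i := B^{i-1} (the vector of all past channel outputs). If the channel kernel satisfies Q_i(b_i | b^{i-1}, a^i) = Q_i(b_i | b^{i-1}, a_i) for all i (Class A channel), then for any feedback input kernels P_i(a_i | a^{i-1}, b^{i-1}), the controlled state process satisfies the Markov property P(s_{i+1} | s^i, a^i) = P(s_{i+1} | s_i, a_i) for i = 0,...,n−1, under the induced joint distribution. -/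
open Finset

variable {n : ℕ} {A B : Type} [Fintype A] [Fintype B] [DecidableEq A] [DecidableEq B]

set_option linter.unusedSectionVars false

lemma sum_split {ι γ : Type*} [Fintype ι] [DecidableEq ι] [Fintype γ] [DecidableEq γ]
    (k : ι) (d : γ) (f : (ι → γ) → ℝ) :
    ∑ g : ι → γ, f g
      = ∑ g : ι → γ, if g k = d then ∑ x : γ, f (Function.update g k x) else 0 := by
  have hinv : Function.Involutive
      (fun p : (ι → γ) × γ => (Function.update p.1 k p.2, p.1 k)) := by
    rintro ⟨g, x⟩; simp
  have h2 := Fintype.sum_bijective _ hinv.bijective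
    (fun p : (ι → γ) × γ => if p.1 k = d then f (Function.update p.1 k p.2) else 0)
    (fun p : (ι → γ) × γ => if p.2 = d then f p.1 else 0)
    (by rintro ⟨g, x⟩; simp)
  calc ∑ g : ι → γ, f g
      = ∑ p : (ι → γ) × γ, (if p.2 = d then f p.1 else 0) := by
        rw [Fintype.sum_prod_type]; simp
    _ = ∑ p : (ι → γ) × γ, (if p.1 k = d then f (Function.update p.1 k p.2) else 0) := h2.symm
    _ = ∑ g : ι → γ, if g k = d then ∑ x : γ, f (Function.update g k x) else 0 := by
        rw [Fintype.sum_prod_type]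
        apply Finset.sum_congr rfl; intro g _
        by_cases h : g k = d <;> simp [h]

lemma sum_free_coord {ι γ : Type*} [Fintype ι] [DecidableEq ι] [Fintype γ] [DecidableEq γ]
    (m : ι) (b : ι → γ) (f : (ι → γ) → ℝ) :
    ∑ g : ι → γ, (if ∀ j, j ≠ m → g j = b j then f g else 0)
      = ∑ y : γ, f (Function.update b m y) := by
  have key : ∀ g : ι → γ, (if (∀ j, j ≠ m → g j = b j) then f g else 0)
      = ∑ y : γ, if g = Function.update b m y then f g else 0 := by
    intro g
    by_cases h : ∀ j, j ≠ m → g j = b j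
    · rw [if_pos h]
      have hg : g = Function.update b m (g m) := by
        funext j; by_cases hj : j = m
        · subst hj; simp
        · simp [Function.update_of_ne hj, h j hj]
      rw [Finset.sum_eq_single (g m)]
      · rw [if_pos hg]
      · intro y _ hy
        rw [if_neg]; intro hgy
        apply hy; rw [hgy]; simp
      · simp
    · rw [if_neg h, eq_comm]
      apply Finset.sum_eq_zero
      intro y _
      rw [if_neg]; intro hgy; apply h; intro j hj
      rw [hgy]; simp [Function.update_of_ne hj]
  simp_rw [key]
  rw [Finset.sum_comm]
  apply Finset.sum_congr rfl; intro y _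
  simp

/-- Partial product of kernels over indices `j < k`. -/
noncomputable def Gprod (Q P : Fin (n+1) → (Fin (n+1) → A) → (Fin (n+1) → B) → ℝ)
    (k : ℕ) (a : Fin (n+1) → A) (b : Fin (n+1) → B) : ℝ :=
  ∏ j ∈ Finset.univ.filter (fun j : Fin (n+1) => (j:ℕ) < k), Q j a b * P j a b

lemma Gprod_congr {Q P : Fin (n+1) → (Fin (n+1) → A) → (Fin (n+1) → B) → ℝ}
    (hQ : IsChannel Q) (hP : IsInput P) (k : ℕ) (a a' : Fin (n+1) → A)
    (b b' : Fin (n+1) → B)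
    (ha : ∀ j : Fin (n+1), (j:ℕ) < k → a j = a' j)
    (hb : ∀ j : Fin (n+1), (j:ℕ) < k → b j = b' j) :
    Gprod Q P k a b = Gprod Q P k a' b' := by
  unfold Gprod
  apply Finset.prod_congr rfl
  intro j hj
  simp only [Finset.mem_filter, Finset.mem_univ, true_and] at hj
  rw [hQ.2.2 j a a' b b' (fun l hl => ha l (by omega)) (fun l hl => hb l (by omega)),
      hP.2.2 j a a' b b' (fun l hl => ha l (by omega)) (fun l hl => hb l (by omega))]

lemma Gprod_succ (Q P : Fin (n+1) → (Fin (n+1) → A) → (Fin (n+1) → B) → ℝ)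
    (k : ℕ) (hk : k < n+1) (a : Fin (n+1) → A) (b : Fin (n+1) → B) :
    Gprod Q P (k+1) a b = Q ⟨k, hk⟩ a b * P ⟨k, hk⟩ a b * Gprod Q P k a b := by
  unfold Gprod
  have hset : Finset.univ.filter (fun j : Fin (n+1) => (j:ℕ) < k+1)
      = insert (⟨k, hk⟩ : Fin (n+1))
          (Finset.univ.filter fun j : Fin (n+1) => (j:ℕ) < k) := by
    ext j
    simp only [Finset.mem_filter, Finset.mem_univ, true_and, Finset.mem_insert, Fin.ext_iff]
    omega
  rw [hset, Finset.prod_insert (by simp)]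

/-- The partial sum: coordinates `≥ k` pinned, product over `j < k`. -/
noncomputable def Ssum (Q P : Fin (n+1) → (Fin (n+1) → A) → (Fin (n+1) → B) → ℝ)
    (SA SB : Finset (Fin (n+1))) (k : ℕ)
    (a : Fin (n+1) → A) (b : Fin (n+1) → B) : ℝ :=
  ∑ a' : Fin (n+1) → A, ∑ b' : Fin (n+1) → B,
    if ((∀ j ∈ SA, a' j = a j) ∧ (∀ j : Fin (n+1), k ≤ (j:ℕ) → a' j = a j))
        ∧ ((∀ j ∈ SB, b' j = b j) ∧ (∀ j : Fin (n+1), k ≤ (j:ℕ) → b' j = b j))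
    then Gprod Q P k a' b' else 0

lemma Ssum_top (Q P : Fin (n+1) → (Fin (n+1) → A) → (Fin (n+1) → B) → ℝ)
    (SA SB : Finset (Fin (n+1))) (a : Fin (n+1) → A) (b : Fin (n+1) → B) :
    marg (joint Q P) SA SB a b = Ssum Q P SA SB (n+1) a b := by
  unfold marg Ssum
  apply Finset.sum_congr rfl; intro a' _
  apply Finset.sum_congr rfl; intro b' _
  have hvacA : (∀ j : Fin (n+1), n+1 ≤ (j:ℕ) → a' j = a j) := by
    intro j hj; exact absurd hj (by omega)
  have hvacB : (∀ j : Fin (n+1), n+1 ≤ (j:ℕ) → b' j = b j) := by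
    intro j hj; exact absurd hj (by omega)
  have hG : joint Q P a' b' = Gprod Q P (n+1) a' b' := by
    unfold joint Gprod
    apply Finset.prod_congr _ (fun _ _ => rfl)
    ext j; simp [Nat.lt_succ_iff, Fin.is_le]
  rw [hG]
  apply if_congr _ rfl rfl
  constructor
  · rintro ⟨h1, h2⟩; exact ⟨⟨h1, hvacA⟩, ⟨h2, hvacB⟩⟩
  · rintro ⟨⟨h1, _⟩, ⟨h2, _⟩⟩; exact ⟨h1, h2⟩

lemma Ssum_step {Q P : Fin (n+1) → (Fin (n+1) → A) → (Fin (n+1) → B) → ℝ}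
    (hQ : IsChannel Q) (hP : IsInput P)
    (SA SB : Finset (Fin (n+1))) (k : ℕ) (hk : k < n+1)
    (hA : ∀ j ∈ SA, (j:ℕ) < k) (hB : ∀ j ∈ SB, (j:ℕ) < k)
    (a : Fin (n+1) → A) (b : Fin (n+1) → B) :
    Ssum Q P SA SB (k+1) a b = Ssum Q P SA SB k a b := by
  set κ : Fin (n+1) := ⟨k, hk⟩ with hκ
  unfold Ssum
  -- split outer sum at coordinate κ
  rw [sum_split κ (a κ)
    (fun a' => ∑ b' : Fin (n+1) → B,
      if ((∀ j ∈ SA, a' j = a j) ∧ (∀ j : Fin (n+1), k+1 ≤ (j:ℕ) → a' j = a j))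
          ∧ ((∀ j ∈ SB, b' j = b j) ∧ (∀ j : Fin (n+1), k+1 ≤ (j:ℕ) → b' j = b j))
      then Gprod Q P (k+1) a' b' else 0)]
  apply Finset.sum_congr rfl
  intro a' _
  by_cases haκ : a' κ = a κ
  · rw [if_pos haκ]
    -- split each inner b'-sum at κ, then swap the x-sum inside
    rw [show (∑ x : A, ∑ b' : Fin (n+1) → B,
        if ((∀ j ∈ SA, Function.update a' κ x j = a j)
              ∧ (∀ j : Fin (n+1), k+1 ≤ (j:ℕ) → Function.update a' κ x j = a j))
            ∧ ((∀ j ∈ SB, b' j = b j) ∧ (∀ j : Fin (n+1), k+1 ≤ (j:ℕ) → b' j = b j))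
        then Gprod Q P (k+1) (Function.update a' κ x) b' else 0)
      = ∑ b' : Fin (n+1) → B, ∑ x : A,
        if ((∀ j ∈ SA, Function.update a' κ x j = a j)
              ∧ (∀ j : Fin (n+1), k+1 ≤ (j:ℕ) → Function.update a' κ x j = a j))
            ∧ ((∀ j ∈ SB, b' j = b j) ∧ (∀ j : Fin (n+1), k+1 ≤ (j:ℕ) → b' j = b j))
        then Gprod Q P (k+1) (Function.update a' κ x) b' else 0 from Finset.sum_comm]
    rw [sum_split κ (b κ)
      (fun b' => ∑ x : A,
        if ((∀ j ∈ SA, Function.update a' κ x j = a j)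
              ∧ (∀ j : Fin (n+1), k+1 ≤ (j:ℕ) → Function.update a' κ x j = a j))
            ∧ ((∀ j ∈ SB, b' j = b j) ∧ (∀ j : Fin (n+1), k+1 ≤ (j:ℕ) → b' j = b j))
        then Gprod Q P (k+1) (Function.update a' κ x) b' else 0)]
    apply Finset.sum_congr rfl
    intro b' _
    by_cases hbκ : b' κ = b κ
    · rw [if_pos hbκ]
      -- condition invariance under updates at κ
      have hcondA : ∀ x : A,
          ((∀ j ∈ SA, Function.update a' κ x j = a j)
            ∧ (∀ j : Fin (n+1), k+1 ≤ (j:ℕ) → Function.update a' κ x j = a j))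
          ↔ ((∀ j ∈ SA, a' j = a j) ∧ (∀ j : Fin (n+1), k+1 ≤ (j:ℕ) → a' j = a j)) := by
        intro x
        have hne : ∀ j : Fin (n+1), (j:ℕ) ≠ k → Function.update a' κ x j = a' j := by
          intro j hj
          exact Function.update_of_ne (by simpa [hκ, Fin.ext_iff] using hj) _ _
        constructor
        · rintro ⟨h1, h2⟩
          exact ⟨fun j hj => by rw [← hne j (by have := hA j hj; omega)]; exact h1 j hj,
                 fun j hj => by rw [← hne j (by omega)]; exact h2 j hj⟩
        · rintro ⟨h1, h2⟩
          exact ⟨fun j hj => by rw [hne j (by have := hA j hj; omega)]; exact h1 j hj,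
                 fun j hj => by rw [hne j (by omega)]; exact h2 j hj⟩
      have hcondB : ∀ y : B,
          ((∀ j ∈ SB, Function.update b' κ y j = b j)
            ∧ (∀ j : Fin (n+1), k+1 ≤ (j:ℕ) → Function.update b' κ y j = b j))
          ↔ ((∀ j ∈ SB, b' j = b j) ∧ (∀ j : Fin (n+1), k+1 ≤ (j:ℕ) → b' j = b j)) := by
        intro y
        have hne : ∀ j : Fin (n+1), (j:ℕ) ≠ k → Function.update b' κ y j = b' j := by
          intro j hj
          exact Function.update_of_ne (by simpa [hκ, Fin.ext_iff] using hj) _ _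
        constructor
        · rintro ⟨h1, h2⟩
          exact ⟨fun j hj => by rw [← hne j (by have := hB j hj; omega)]; exact h1 j hj,
                 fun j hj => by rw [← hne j (by omega)]; exact h2 j hj⟩
        · rintro ⟨h1, h2⟩
          exact ⟨fun j hj => by rw [hne j (by have := hB j hj; omega)]; exact h1 j hj,
                 fun j hj => by rw [hne j (by omega)]; exact h2 j hj⟩
      by_cases hcond : ((∀ j ∈ SA, a' j = a j) ∧ (∀ j : Fin (n+1), k+1 ≤ (j:ℕ) → a' j = a j))
          ∧ ((∀ j ∈ SB, b' j = b j) ∧ (∀ j : Fin (n+1), k+1 ≤ (j:ℕ) → b' j = b j))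
      · -- both conditions hold: compute the double sum
        have hG : ∀ (x : A) (y : B),
            Gprod Q P (k+1) (Function.update a' κ x) (Function.update b' κ y)
              = Q κ (Function.update a' κ x) (Function.update b' κ y)
                * P κ (Function.update a' κ x) b' * Gprod Q P k a' b' := by
          intro x y
          rw [Gprod_succ Q P k hk]
          have h1 : Gprod Q P k (Function.update a' κ x) (Function.update b' κ y)
              = Gprod Q P k a' b' :=
            Gprod_congr hQ hP k _ a' _ b'
              (fun j hj => Function.update_of_ne (by simp [hκ, Fin.ext_iff]; omega) _ _)
              (fun j hj => Function.update_of_ne (by simp [hκ, Fin.ext_iff]; omega) _ _)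
          have h2 : P κ (Function.update a' κ x) (Function.update b' κ y)
              = P κ (Function.update a' κ x) b' :=
            hP.2.2 κ _ _ _ _ (fun l _ => rfl)
              (fun l hl => Function.update_of_ne (Fin.ne_of_lt hl) _ _)
          rw [h1, h2]
        have hpos : ((∀ j ∈ SA, a' j = a j) ∧ (∀ j : Fin (n+1), k ≤ (j:ℕ) → a' j = a j))
            ∧ ((∀ j ∈ SB, b' j = b j) ∧ (∀ j : Fin (n+1), k ≤ (j:ℕ) → b' j = b j)) := by
          constructor
          · refine ⟨hcond.1.1, fun j hj => ?_⟩
            rcases Nat.eq_or_lt_of_le hj with he | hlt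
            · have : j = κ := by simp [hκ, Fin.ext_iff]; omega
              rw [this]; exact haκ
            · exact hcond.1.2 j (by omega)
          · refine ⟨hcond.2.1, fun j hj => ?_⟩
            rcases Nat.eq_or_lt_of_le hj with he | hlt
            · have : j = κ := by simp [hκ, Fin.ext_iff]; omega
              rw [this]; exact hbκ
            · exact hcond.2.2 j (by omega)
        rw [if_pos hpos]
        calc (∑ y : B, ∑ x : A,
            if ((∀ j ∈ SA, Function.update a' κ x j = a j)
                  ∧ (∀ j : Fin (n+1), k+1 ≤ (j:ℕ) → Function.update a' κ x j = a j))
                ∧ ((∀ j ∈ SB, Function.update b' κ y j = b j)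
                  ∧ (∀ j : Fin (n+1), k+1 ≤ (j:ℕ) → Function.update b' κ y j = b j))
            then Gprod Q P (k+1) (Function.update a' κ x) (Function.update b' κ y) else 0)
            = ∑ y : B, ∑ x : A, Q κ (Function.update a' κ x) (Function.update b' κ y)
                * P κ (Function.update a' κ x) b' * Gprod Q P k a' b' := by
              apply Finset.sum_congr rfl; intro y _
              apply Finset.sum_congr rfl; intro x _
              rw [if_pos ⟨(hcondA x).2 hcond.1, (hcondB y).2 hcond.2⟩, hG x y]
          _ = ∑ x : A, ∑ y : B, Q κ (Function.update a' κ x) (Function.update b' κ y)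
                * P κ (Function.update a' κ x) b' * Gprod Q P k a' b' := Finset.sum_comm
          _ = Gprod Q P k a' b' := by
              have hxy : ∀ x : A, (∑ y : B, Q κ (Function.update a' κ x) (Function.update b' κ y)
                  * P κ (Function.update a' κ x) b' * Gprod Q P k a' b')
                  = P κ (Function.update a' κ x) b' * Gprod Q P k a' b' := by
                intro x
                rw [← Finset.sum_mul, ← Finset.sum_mul, hQ.2.1 κ (Function.update a' κ x) b',
                  one_mul]
              simp_rw [hxy]
              rw [← Finset.sum_mul, hP.2.1 κ a' b', one_mul]
      · -- condition fails: both sides zero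
        rw [if_neg]
        · apply Finset.sum_eq_zero; intro y _
          apply Finset.sum_eq_zero; intro x _
          rw [if_neg]
          intro hc
          exact hcond ⟨(hcondA x).1 hc.1, (hcondB y).1 hc.2⟩
        · intro hc
          apply hcond
          refine ⟨⟨hc.1.1, fun j hj => hc.1.2 j (by omega)⟩,
                  ⟨hc.2.1, fun j hj => hc.2.2 j (by omega)⟩⟩
    · rw [if_neg hbκ, eq_comm, if_neg]
      intro hc
      exact hbκ (hc.2.2 κ (by simp [hκ]))
  · rw [if_neg haκ, eq_comm]
    apply Finset.sum_eq_zero; intro b' _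
    rw [if_neg]
    intro hc
    exact haκ (hc.1.2 κ (by simp [hκ]))

lemma Ssum_descend {Q P : Fin (n+1) → (Fin (n+1) → A) → (Fin (n+1) → B) → ℝ}
    (hQ : IsChannel Q) (hP : IsInput P)
    (SA SB : Finset (Fin (n+1))) (k : ℕ) (hk : k ≤ n+1)
    (hA : ∀ j ∈ SA, (j:ℕ) < k) (hB : ∀ j ∈ SB, (j:ℕ) < k)
    (a : Fin (n+1) → A) (b : Fin (n+1) → B) :
    marg (joint Q P) SA SB a b = Ssum Q P SA SB k a b := by
  rw [Ssum_top]
  have key : ∀ m, k ≤ m → m ≤ n+1 → Ssum Q P SA SB m a b = Ssum Q P SA SB k a b := by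
    intro m
    induction m with
    | zero =>
      intro h1 _
      have : k = 0 := Nat.le_zero.mp h1
      rw [this]
    | succ m ih =>
      intro h1 h2
      rcases Nat.eq_or_lt_of_le h1 with he | hlt
      · rw [← he]
      · rw [Ssum_step hQ hP SA SB m (by omega)
          (fun j hj => by have := hA j hj; omega)
          (fun j hj => by have := hB j hj; omega) a b]
        exact ih (by omega) (by omega)
  exact key (n+1) hk le_rfl

lemma sum_free_coordB (m : Fin (n+1)) (b : Fin (n+1) → B) (f : (Fin (n+1) → B) → ℝ) :
    ∑ g : Fin (n+1) → B, (if ∀ j : Fin (n+1), j ≠ m → g j = b j then f g else 0)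
      = ∑ y : B, f (Function.update b m y) := by
  have key : ∀ g : Fin (n+1) → B, (if (∀ j : Fin (n+1), j ≠ m → g j = b j) then f g else 0)
      = ∑ y : B, if g = Function.update b m y then f g else 0 := by
    intro g
    by_cases h : ∀ j : Fin (n+1), j ≠ m → g j = b j
    · rw [if_pos h]
      have hg : g = Function.update b m (g m) := by
        funext j; by_cases hj : j = m
        · subst hj; simp
        · simp [Function.update_of_ne hj, h j hj]
      rw [Finset.sum_eq_single (g m)]
      · rw [if_pos hg]
      · intro y _ hy
        rw [if_neg]; intro hgy
        apply hy; rw [hgy]; simp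
      · simp
    · rw [if_neg h, eq_comm]
      apply Finset.sum_eq_zero
      intro y _
      rw [if_neg]; intro hgy; apply h; intro j hj
      rw [hgy]; simp [Function.update_of_ne hj]
  simp_rw [key]
  rw [Finset.sum_comm]
  apply Finset.sum_congr rfl; intro y _
  simp

/-- The common factor `W = ∑_{a'⁻ free} P_i(a') G_i(a')`. -/
noncomputable def Wsum (Q P : Fin (n+1) → (Fin (n+1) → A) → (Fin (n+1) → B) → ℝ)
    (i : Fin (n+1)) (a : Fin (n+1) → A) (b : Fin (n+1) → B) : ℝ :=
  ∑ a' : Fin (n+1) → A,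
    if ∀ j : Fin (n+1), (i:ℕ) ≤ (j:ℕ) → a' j = a j
    then P i a' b * Gprod Q P (i:ℕ) a' b else 0

lemma inner_collapse {Q P : Fin (n+1) → (Fin (n+1) → A) → (Fin (n+1) → B) → ℝ}
    (hQ : IsChannel Q) (hP : IsInput P) (i : Fin (n+1))
    (a' : Fin (n+1) → A) (b : Fin (n+1) → B) :
    ∑ y : B, Gprod Q P ((i:ℕ)+1) a' (Function.update b i y)
      = P i a' b * Gprod Q P (i:ℕ) a' b := by
  have hy : ∀ y : B, Gprod Q P ((i:ℕ)+1) a' (Function.update b i y)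
      = Q i a' (Function.update b i y) * (P i a' b * Gprod Q P (i:ℕ) a' b) := by
    intro y
    rw [Gprod_succ Q P (i:ℕ) i.isLt]
    simp only [Fin.eta]
    have h1 : P i a' (Function.update b i y) = P i a' b :=
      hP.2.2 i a' a' _ b (fun _ _ => rfl)
        (fun l hl => Function.update_of_ne (Fin.ne_of_lt hl) _ _)
    have h2 : Gprod Q P (i:ℕ) a' (Function.update b i y) = Gprod Q P (i:ℕ) a' b :=
      Gprod_congr hQ hP (i:ℕ) a' a' _ b (fun _ _ => rfl)
        (fun l hl => Function.update_of_ne (Fin.ne_of_lt hl) _ _)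
    rw [h1, h2]; ring
  simp_rw [hy]
  rw [← Finset.sum_mul, hQ.2.1 i a' b, one_mul]

lemma cond_le_iff (i : Fin (n+1)) (a : Fin (n+1) → A) (a' : Fin (n+1) → A) :
    ((∀ j ∈ idxLe n i, a' j = a j) ∧ (∀ j : Fin (n+1), (i:ℕ)+1 ≤ (j:ℕ) → a' j = a j))
      ↔ a' = a := by
  constructor
  · rintro ⟨h1, h2⟩
    funext j
    by_cases hj : (j:ℕ) ≤ (i:ℕ)
    · exact h1 j (by simp only [idxLe, Finset.mem_filter, Finset.mem_univ, true_and]; exact hj)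
    · exact h2 j (by omega)
  · rintro rfl; exact ⟨fun _ _ => rfl, fun _ _ => rfl⟩

lemma cond_lt_iff (i : Fin (n+1)) (b : Fin (n+1) → B) (b' : Fin (n+1) → B) :
    ((∀ j ∈ idxLt n i, b' j = b j) ∧ (∀ j : Fin (n+1), (i:ℕ)+1 ≤ (j:ℕ) → b' j = b j))
      ↔ ∀ j : Fin (n+1), j ≠ i → b' j = b j := by
  constructor
  · rintro ⟨h1, h2⟩ j hj
    rcases Nat.lt_or_ge (j:ℕ) (i:ℕ) with h | h
    · exact h1 j (by simp only [idxLt, Finset.mem_filter, Finset.mem_univ, true_and]; exact h)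
    · have : (i:ℕ) < (j:ℕ) := by
        rcases Nat.eq_or_lt_of_le h with he | hlt
        · exact absurd (Fin.ext he.symm) hj
        · exact hlt
      exact h2 j (by omega)
  · intro h
    refine ⟨fun j hj => ?_, fun j hj => h j (by intro he; rw [he] at hj; omega)⟩
    have hjlt : (j:ℕ) < (i:ℕ) := by
      simpa only [idxLt, Finset.mem_filter, Finset.mem_univ, true_and] using hj
    exact h j (by intro he; rw [he] at hjlt; omega)

lemma cond_pin_iff (i : Fin (n+1)) (a : Fin (n+1) → A) (a' : Fin (n+1) → A) :
    ((∀ j ∈ ({i} : Finset (Fin (n+1))), a' j = a j)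
        ∧ (∀ j : Fin (n+1), (i:ℕ)+1 ≤ (j:ℕ) → a' j = a j))
      ↔ ∀ j : Fin (n+1), (i:ℕ) ≤ (j:ℕ) → a' j = a j := by
  constructor
  · rintro ⟨h1, h2⟩ j hj
    rcases Nat.eq_or_lt_of_le hj with he | hlt
    · have : j = i := Fin.ext he.symm
      rw [this]; exact h1 i (Finset.mem_singleton_self i)
    · exact h2 j (by omega)
  · intro h
    exact ⟨fun j hj => h j (by rw [Finset.mem_singleton] at hj; rw [hj]),
           fun j hj => h j (by omega)⟩

lemma Ssum_M1 {Q P : Fin (n+1) → (Fin (n+1) → A) → (Fin (n+1) → B) → ℝ}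
    (i : Fin (n+1)) (a : Fin (n+1) → A) (b : Fin (n+1) → B) :
    Ssum Q P (idxLe n i) (idxLe n i) ((i:ℕ)+1) a b
      = Q i a b * P i a b * Gprod Q P (i:ℕ) a b := by
  unfold Ssum
  have h1 : ∀ (a' : Fin (n+1) → A) (b' : Fin (n+1) → B),
      (if ((∀ j ∈ idxLe n i, a' j = a j) ∧ (∀ j : Fin (n+1), (i:ℕ)+1 ≤ (j:ℕ) → a' j = a j))
          ∧ ((∀ j ∈ idxLe n i, b' j = b j) ∧ (∀ j : Fin (n+1), (i:ℕ)+1 ≤ (j:ℕ) → b' j = b j))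
      then Gprod Q P ((i:ℕ)+1) a' b' else 0)
      = if a' = a then (if b' = b then Gprod Q P ((i:ℕ)+1) a' b' else 0) else 0 := by
    intro a' b'
    rw [if_congr (and_congr (cond_le_iff i a a') (cond_le_iff i b b'))
      (rfl : Gprod Q P ((i:ℕ)+1) a' b' = _) rfl, ite_and]
  simp_rw [h1]
  have h2 : ∀ a' : Fin (n+1) → A,
      (∑ b' : Fin (n+1) → B,
        if a' = a then (if b' = b then Gprod Q P ((i:ℕ)+1) a' b' else 0) else 0)
      = if a' = a then Gprod Q P ((i:ℕ)+1) a' b else 0 := by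
    intro a'
    by_cases h : a' = a
    · simp only [h, if_true, eq_self_iff_true]
      rw [Finset.sum_ite_eq' Finset.univ b (fun b' => Gprod Q P ((i:ℕ)+1) a b')]
      simp
    · simp [h]
  simp_rw [h2]
  rw [Finset.sum_ite_eq' Finset.univ a (fun a' => Gprod Q P ((i:ℕ)+1) a' b)]
  simp only [Finset.mem_univ, if_true]
  rw [Gprod_succ Q P (i:ℕ) i.isLt]

lemma Ssum_M4 {Q P : Fin (n+1) → (Fin (n+1) → A) → (Fin (n+1) → B) → ℝ}
    (hQ : IsChannel Q) (hP : IsInput P)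
    (i : Fin (n+1)) (a : Fin (n+1) → A) (b : Fin (n+1) → B) :
    Ssum Q P (idxLe n i) (idxLt n i) ((i:ℕ)+1) a b
      = P i a b * Gprod Q P (i:ℕ) a b := by
  unfold Ssum
  have h1 : ∀ (a' : Fin (n+1) → A) (b' : Fin (n+1) → B),
      (if ((∀ j ∈ idxLe n i, a' j = a j) ∧ (∀ j : Fin (n+1), (i:ℕ)+1 ≤ (j:ℕ) → a' j = a j))
          ∧ ((∀ j ∈ idxLt n i, b' j = b j) ∧ (∀ j : Fin (n+1), (i:ℕ)+1 ≤ (j:ℕ) → b' j = b j))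
      then Gprod Q P ((i:ℕ)+1) a' b' else 0)
      = if a' = a then (if (∀ j : Fin (n+1), j ≠ i → b' j = b j)
          then Gprod Q P ((i:ℕ)+1) a' b' else 0) else 0 := by
    intro a' b'
    rw [if_congr (and_congr (cond_le_iff i a a') (cond_lt_iff i b b'))
      (rfl : Gprod Q P ((i:ℕ)+1) a' b' = _) rfl, ite_and]
  simp_rw [h1]
  have h2 : ∀ a' : Fin (n+1) → A,
      (∑ b' : Fin (n+1) → B,
        if a' = a then (if (∀ j : Fin (n+1), j ≠ i → b' j = b j)
          then Gprod Q P ((i:ℕ)+1) a' b' else 0) else 0)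
      = if a' = a then P i a' b * Gprod Q P (i:ℕ) a' b else 0 := by
    intro a'
    by_cases h : a' = a
    · simp only [h, if_true, eq_self_iff_true]
      exact (sum_free_coordB i b (fun b' => Gprod Q P ((i:ℕ)+1) a b')).trans
        (inner_collapse hQ hP i a b)
    · simp [h]
  simp_rw [h2]
  rw [Finset.sum_ite_eq' Finset.univ a (fun a' => P i a' b * Gprod Q P (i:ℕ) a' b)]
  simp

lemma Ssum_M3 {Q P : Fin (n+1) → (Fin (n+1) → A) → (Fin (n+1) → B) → ℝ}
    (hQA : ∀ (i : Fin (n+1)) (a a' : Fin (n+1) → A) (b b' : Fin (n+1) → B),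
      a i = a' i → (∀ j : Fin (n+1), (j:ℕ) ≤ (i:ℕ) → b j = b' j) → Q i a b = Q i a' b')
    (i : Fin (n+1)) (a : Fin (n+1) → A) (b : Fin (n+1) → B) :
    Ssum Q P ({i} : Finset (Fin (n+1))) (idxLe n i) ((i:ℕ)+1) a b
      = Q i a b * Wsum Q P i a b := by
  unfold Ssum Wsum
  rw [Finset.mul_sum]
  apply Finset.sum_congr rfl
  intro a' _
  have h1 : ∀ b' : Fin (n+1) → B,
      (if ((∀ j ∈ ({i} : Finset (Fin (n+1))), a' j = a j)
            ∧ (∀ j : Fin (n+1), (i:ℕ)+1 ≤ (j:ℕ) → a' j = a j))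
          ∧ ((∀ j ∈ idxLe n i, b' j = b j) ∧ (∀ j : Fin (n+1), (i:ℕ)+1 ≤ (j:ℕ) → b' j = b j))
      then Gprod Q P ((i:ℕ)+1) a' b' else 0)
      = if (∀ j : Fin (n+1), (i:ℕ) ≤ (j:ℕ) → a' j = a j)
          then (if b' = b then Gprod Q P ((i:ℕ)+1) a' b' else 0) else 0 := by
    intro b'
    rw [if_congr (and_congr (cond_pin_iff i a a') (cond_le_iff i b b'))
      (rfl : Gprod Q P ((i:ℕ)+1) a' b' = _) rfl, ite_and]
  simp_rw [h1]
  by_cases h : ∀ j : Fin (n+1), (i:ℕ) ≤ (j:ℕ) → a' j = a j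
  · simp only [if_pos h]
    rw [Finset.sum_ite_eq' Finset.univ b (fun b' => Gprod Q P ((i:ℕ)+1) a' b')]
    simp only [Finset.mem_univ, if_true]
    rw [Gprod_succ Q P (i:ℕ) i.isLt]
    simp only [Fin.eta]
    rw [hQA i a' a b b (h i le_rfl) (fun _ _ => rfl)]
    ring
  · simp only [if_neg h, Finset.sum_const_zero, mul_zero]

lemma Ssum_M2 {Q P : Fin (n+1) → (Fin (n+1) → A) → (Fin (n+1) → B) → ℝ}
    (hQ : IsChannel Q) (hP : IsInput P)
    (i : Fin (n+1)) (a : Fin (n+1) → A) (b : Fin (n+1) → B) :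
    Ssum Q P ({i} : Finset (Fin (n+1))) (idxLt n i) ((i:ℕ)+1) a b
      = Wsum Q P i a b := by
  unfold Ssum Wsum
  apply Finset.sum_congr rfl
  intro a' _
  have h1 : ∀ b' : Fin (n+1) → B,
      (if ((∀ j ∈ ({i} : Finset (Fin (n+1))), a' j = a j)
            ∧ (∀ j : Fin (n+1), (i:ℕ)+1 ≤ (j:ℕ) → a' j = a j))
          ∧ ((∀ j ∈ idxLt n i, b' j = b j) ∧ (∀ j : Fin (n+1), (i:ℕ)+1 ≤ (j:ℕ) → b' j = b j))
      then Gprod Q P ((i:ℕ)+1) a' b' else 0)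
      = if (∀ j : Fin (n+1), (i:ℕ) ≤ (j:ℕ) → a' j = a j)
          then (if (∀ j : Fin (n+1), j ≠ i → b' j = b j)
            then Gprod Q P ((i:ℕ)+1) a' b' else 0) else 0 := by
    intro b'
    rw [if_congr (and_congr (cond_pin_iff i a a') (cond_lt_iff i b b'))
      (rfl : Gprod Q P ((i:ℕ)+1) a' b' = _) rfl, ite_and]
  simp_rw [h1]
  by_cases h : ∀ j : Fin (n+1), (i:ℕ) ≤ (j:ℕ) → a' j = a j
  · simp only [if_pos h]
    exact (sum_free_coordB i b (fun b' => Gprod Q P ((i:ℕ)+1) a' b')).trans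
      (inner_collapse hQ hP i a' b)
  · simp only [if_neg h, Finset.sum_const_zero]

/-- for a Class A channel (`Q_i` depends on `(b^{i-1}, a_i)` only), under
any feedback input kernels, the state process `S_i = B^{i-1}` satisfies the Markov
property `P(s_{i+1} | s^i, a^i) = P(s_{i+1} | s_i, a_i)`: equivalently, `B_i` is
conditionally independent of `A^{i-1}` given `(B^{i-1}, A_i)`.  Stated in
cross-multiplied form (valid also at zero-probability points). -/
theorem stmt2 (Q P : Fin (n+1) → (Fin (n+1) → A) → (Fin (n+1) → B) → ℝ)
    (hQ : IsChannel Q)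
    (hQA : ∀ (i : Fin (n+1)) (a a' : Fin (n+1) → A) (b b' : Fin (n+1) → B),
      a i = a' i → (∀ j : Fin (n+1), (j:ℕ) ≤ (i:ℕ) → b j = b' j) → Q i a b = Q i a' b')
    (hP : IsInput P) :
    ∀ (i : Fin (n+1)) (a : Fin (n+1) → A) (b : Fin (n+1) → B),
      marg (joint Q P) (idxLe n i) (idxLe n i) a b * marg (joint Q P) {i} (idxLt n i) a b
        = marg (joint Q P) {i} (idxLe n i) a b
            * marg (joint Q P) (idxLe n i) (idxLt n i) a b := by
  intro i a b
  have hle : ∀ j ∈ idxLe n i, (j:ℕ) ≤ (i:ℕ) := by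
    intro j hj
    simpa only [idxLe, Finset.mem_filter, Finset.mem_univ, true_and] using hj
  have hlt : ∀ j ∈ idxLt n i, (j:ℕ) ≤ (i:ℕ) := by
    intro j hj
    have : (j:ℕ) < (i:ℕ) := by
      simpa only [idxLt, Finset.mem_filter, Finset.mem_univ, true_and] using hj
    omega
  have hsing : ∀ j ∈ ({i} : Finset (Fin (n+1))), (j:ℕ) ≤ (i:ℕ) := by
    intro j hj
    rw [Finset.mem_singleton] at hj
    rw [hj]
  have hred : ∀ SA SB : Finset (Fin (n+1)), (∀ j ∈ SA, (j:ℕ) ≤ (i:ℕ)) →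
      (∀ j ∈ SB, (j:ℕ) ≤ (i:ℕ)) →
      marg (joint Q P) SA SB a b = Ssum Q P SA SB ((i:ℕ)+1) a b := by
    intro SA SB hA hB
    exact Ssum_descend hQ hP SA SB ((i:ℕ)+1) (Nat.succ_le_of_lt i.isLt)
      (fun j hj => by have := hA j hj; omega)
      (fun j hj => by have := hB j hj; omega) a b
  rw [hred _ _ hle hle, hred _ _ hsing hlt, hred _ _ hsing hle, hred _ _ hle hlt,
    Ssum_M1 i a b, Ssum_M2 hQ hP i a b, Ssum_M3 hQA i a b, Ssum_M4 hQ hP i a b]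
  ring
end
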